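/- arXiv:2506.19423 — 3 statements merged into one kernel-verified Lean document; each statement's English description precedes it below -/
import Mathlib

section
/- Let K be a field of characteristic zero in which -3 is not a square, and let L = K(√-3). For every nonzero u ∈ K, u is a cube in L if and only if u is a cube in K. -/
open Polynomial

/-!
Every element of `K[X]/(X² + 3)` is uniquely `a + bθ` with `a, b ∈ K` and `θ² = -3`. Expanding,
`(a + bθ)³ = (a³ - 9ab²) + 3b(a² - b²)θ`, so `(a + bθ)³ = u` forces `b(a² - b²) = 0` and
`u = a³ - 9ab²`: then `u = a³` if `b = 0`, and `u = -8a³ = (-2a)³` if `b = ±a`.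
-/

namespace AdjoinRoot

variable {R : Type*} [CommRing R] {f : R[X]}

theorem exists_algebraMap_add_algebraMap_mul_root_eq (hf : f.Monic) (hdeg : f.natDegree = 2)
    (x : AdjoinRoot f) : ∃ a b : R, algebraMap R _ a + algebraMap R _ b * root f = x := by
  obtain ⟨p, rfl⟩ := mk_surjective x
  have hlin : (p %ₘ f).natDegree ≤ 1 := by
    have := natDegree_modByMonic_lt p hf (by rintro rfl; simp at hdeg)
    omega
  refine ⟨(p %ₘ f).coeff 0, (p %ₘ f).coeff 1, ?_⟩
  rw [← mk_leftInverse hf (mk f p), modByMonicHom_mk, eq_X_add_C_of_natDegree_le_one hlin]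
  simp [mk_X, mk_C, add_comm]

theorem algebraMap_add_algebraMap_mul_root_eq_zero [Nontrivial R] (hf : f.Monic)
    (hdeg : f.natDegree = 2) {a b : R} :
    algebraMap R _ a + algebraMap R _ b * root f = 0 ↔ a = 0 ∧ b = 0 := by
  refine ⟨fun h => ?_, by rintro ⟨rfl, rfl⟩; simp⟩
  have hlin : (C b * X + C a) %ₘ f = C b * X + C a := by
    rw [modByMonic_eq_self_iff hf, degree_eq_natDegree hf.ne_zero, hdeg]
    exact degree_linear_le.trans_lt (by norm_num)
  have hmk : mk f (C b * X + C a) = 0 := by simpa [mk_X, mk_C, add_comm] using h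
  have hpoly : C b * X + C a = 0 := by
    simpa only [modByMonicHom_mk, hlin, map_zero] using congrArg (modByMonicHom hf) hmk
  exact ⟨by simpa using congrArg (coeff · 0) hpoly, by simpa using congrArg (coeff · 1) hpoly⟩

theorem root_X_pow_two_add_C_sq (c : R) : root (X ^ 2 + C c) ^ 2 = -algebraMap R _ c := by
  rw [eq_neg_iff_add_eq_zero, ← eval₂_root (X ^ 2 + C c), eval₂_add, eval₂_X_pow, eval₂_C]
  rfl

end AdjoinRoot

theorem exists_pow_three_eq_of_mul_sq_sub_sq_eq_zero {R : Type*} [CommRing R] [NoZeroDivisors R]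
    {a b : R} (h : b * (a ^ 2 - b ^ 2) = 0) : ∃ w, w ^ 3 = a ^ 3 - 9 * a * b ^ 2 := by
  rcases mul_eq_zero.mp h with hb | hab
  · exact ⟨a, by rw [hb]; ring⟩
  · exact ⟨-2 * a, by linear_combination -9 * a * hab⟩

theorem cube_in_adjoin_sqrt_neg_three_iff_general
    (K : Type*) [Field K] [CharZero K] (u : K) :
    (∃ v : AdjoinRoot (X ^ 2 + C (3 : K)), v ^ 3 = algebraMap K _ u) ↔
      ∃ w : K, w ^ 3 = u := by
  have hmonic : (X ^ 2 + C (3 : K)).Monic := monic_X_pow_add_C 3 two_ne_zero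
  have hdeg : (X ^ 2 + C (3 : K)).natDegree = 2 := natDegree_X_pow_add_C
  constructor
  · rintro ⟨v, hv⟩
    obtain ⟨a, b, rfl⟩ := AdjoinRoot.exists_algebraMap_add_algebraMap_mul_root_eq hmonic hdeg v
    have hθ := AdjoinRoot.root_X_pow_two_add_C_sq (3 : K)
    have hcoord : algebraMap K _ (a ^ 3 - 9 * a * b ^ 2 - u) +
        algebraMap K _ (3 * (b * (a ^ 2 - b ^ 2))) * AdjoinRoot.root (X ^ 2 + C (3 : K)) = 0 := by
      simp only [map_sub, map_mul, map_pow, map_ofNat] at hθ ⊢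
      linear_combination hv - (3 * algebraMap K _ a * algebraMap K _ b ^ 2 +
        algebraMap K _ b ^ 3 * AdjoinRoot.root (X ^ 2 + C (3 : K))) * hθ
    obtain ⟨hu, hb⟩ :=
      (AdjoinRoot.algebraMap_add_algebraMap_mul_root_eq_zero hmonic hdeg).mp hcoord
    obtain ⟨w, hw⟩ := exists_pow_three_eq_of_mul_sq_sub_sq_eq_zero
      ((mul_eq_zero.mp hb).resolve_left three_ne_zero)
    exact ⟨w, by rw [hw, ← sub_eq_zero, hu]⟩
  · rintro ⟨w, rfl⟩
    exact ⟨algebraMap K _ w, (map_pow _ _ _).symm⟩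

/-- Let K be a field of characteristic zero in which -3 is not a square, and
let L = K(√-3). For every nonzero u ∈ K, u is a cube in L if and only if
u is a cube in K. -/
theorem cube_in_adjoin_sqrt_neg_three_iff
    (K : Type*) [Field K] [CharZero K]
    (h3 : ¬ ∃ x : K, x ^ 2 = -3) (u : K) (hu : u ≠ 0) :
    (∃ v : AdjoinRoot (X ^ 2 + C (3 : K)), v ^ 3 = algebraMap K _ u) ↔
      ∃ w : K, w ^ 3 = u :=
  cube_in_adjoin_sqrt_neg_three_iff_general K u
end

section
/- Let A, B be nonzero rational numbers, K a field of characteristic zero, 0 ≤ k ≤ 5, and m a positive integer dividing gcd(6, k). Set q = 6/m and r = k/m. Then the map sending (f(s), g(s)) to (f(t^q)/t^{2r}, g(t^q)/t^{3r}) defines an injective group homomorphism from E_{A,B,k,m}(K(s)) to E_{A,B}(K(t)), where E_{A,B,k,m} is the elliptic curve y² = x³ + s^k(As^m + B) over K(s) and E_{A,B} is y² = x³ + At⁶ + B over K(t). -/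
/-!
The substitution `s ↦ t ^ q` is a field embedding `σ : K(s) → K(t)` sending `s ^ k (A s ^ m + B)`
to `u ^ 6 (A t ^ 6 + B)` with `u = t ^ r`. Hence the change of variables `(x, y) ↦ (x / u², y / u³)`
turns the curve `E_{A,B,k,m}`, with `σ` applied to its coefficients, into `E_{A,B}`. Applying `σ`
and then rescaling by `u` commutes with the chord-tangent construction, because every quantity in
it (equation, slope, coordinates of a sum) is weighted-homogeneous when `x`, `y` and `aᵢ` have
weights `2`, `3` and `i`; the resulting map of points is injective because `σ` is.
-/

section

variable {F L : Type*} [Field F] [Field L] {σ : F →+* L} {u : Lˣ}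

lemma map_div_pow_inj {a b : F} {n : ℕ} : σ a / (u : L) ^ n = σ b / u ^ n ↔ a = b := by
  rw [div_left_inj' (pow_ne_zero n u.ne_zero), σ.injective.eq_iff]

lemma map_div_pow_eq_zero_iff {a : F} {n : ℕ} : σ a / (u : L) ^ n = 0 ↔ a = 0 := by
  simp

end

namespace WeierstrassCurve

variable {F L : Type*} [Field F] [Field L] {σ : F →+* L} {u : Lˣ}

lemma smul_map_mk_a₆ {c : F} {c' : L} (hc : σ c = u ^ 6 * c') :
    (⟨u, 0, 0, 0⟩ : VariableChange L) • (⟨0, 0, 0, 0, c⟩ : WeierstrassCurve F).map σ =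
      ⟨0, 0, 0, 0, c'⟩ := by
  ext <;> simp [variableChange_a₁, variableChange_a₂, variableChange_a₃, variableChange_a₄,
    variableChange_a₆, hc]

namespace Affine

variable {W : WeierstrassCurve F} {W' : WeierstrassCurve L}
  (hW : (⟨u, 0, 0, 0⟩ : VariableChange L) • W.map σ = W')
include hW

lemma scaleMap_equation_iff {x y : F} :
    W'.toAffine.Equation (σ x / u ^ 2) (σ y / u ^ 3) ↔ W.toAffine.Equation x y := by
  rw [equation_iff', equation_iff', ← map_div_pow_eq_zero_iff (σ := σ) (u := u) (n := 6)]
  subst hW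
  simp only [variableChange_a₁, variableChange_a₂, variableChange_a₃, variableChange_a₄,
    variableChange_a₆, map_a₁, map_a₂, map_a₃, map_a₄, map_a₆, Units.val_inv_eq_inv_val]
  field_simp
  simp only [map_sub, map_add, map_mul]
  ring_nf

lemma scaleMap_nonsingular_iff {x y : F} :
    W'.toAffine.Nonsingular (σ x / u ^ 2) (σ y / u ^ 3) ↔ W.toAffine.Nonsingular x y := by
  rw [nonsingular_iff', nonsingular_iff', scaleMap_equation_iff hW, ne_eq, ne_eq, ne_eq, ne_eq,
    ← map_div_pow_eq_zero_iff (σ := σ) (u := u) (n := 4),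
    ← map_div_pow_eq_zero_iff (σ := σ) (u := u) (n := 3)]
  subst hW
  simp only [variableChange_a₁, variableChange_a₂, variableChange_a₃, variableChange_a₄,
    map_a₁, map_a₂, map_a₃, map_a₄, Units.val_inv_eq_inv_val]
  field_simp
  simp only [map_sub, map_add, map_mul, map_ofNat]
  ring_nf

lemma scaleMap_negY (x y : F) :
    W'.toAffine.negY (σ x / u ^ 2) (σ y / u ^ 3) = σ (W.toAffine.negY x y) / u ^ 3 := by
  subst hW
  simp only [negY, variableChange_a₁, variableChange_a₃, map_a₁, map_a₃, Units.val_inv_eq_inv_val]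
  field_simp
  simp only [map_sub, map_neg, map_mul]
  ring

lemma scaleMap_addX (x₁ x₂ ℓ : F) :
    W'.toAffine.addX (σ x₁ / u ^ 2) (σ x₂ / u ^ 2) (σ ℓ / u) =
      σ (W.toAffine.addX x₁ x₂ ℓ) / u ^ 2 := by
  subst hW
  simp only [addX, variableChange_a₁, variableChange_a₂, map_a₁, map_a₂, Units.val_inv_eq_inv_val]
  field_simp
  simp only [map_sub, map_add, map_mul]
  ring

lemma scaleMap_addY (x₁ x₂ y₁ ℓ : F) :
    W'.toAffine.addY (σ x₁ / u ^ 2) (σ x₂ / u ^ 2) (σ y₁ / u ^ 3) (σ ℓ / u) =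
      σ (W.toAffine.addY x₁ x₂ y₁ ℓ) / u ^ 3 := by
  have hnegAddY : W'.toAffine.negAddY (σ x₁ / u ^ 2) (σ x₂ / u ^ 2) (σ y₁ / u ^ 3) (σ ℓ / u) =
      σ (W.toAffine.negAddY x₁ x₂ y₁ ℓ) / u ^ 3 := by
    rw [negAddY, negAddY, scaleMap_addX hW]
    simp only [map_add, map_mul, map_sub]
    field_simp
  rw [addY, addY, scaleMap_addX hW, hnegAddY, scaleMap_negY hW]

variable [DecidableEq F] [DecidableEq L]

lemma scaleMap_slope (x₁ x₂ y₁ y₂ : F) :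
    W'.toAffine.slope (σ x₁ / u ^ 2) (σ x₂ / u ^ 2) (σ y₁ / u ^ 3) (σ y₂ / u ^ 3) =
      σ (W.toAffine.slope x₁ x₂ y₁ y₂) / u := by
  by_cases hx : x₁ = x₂
  · by_cases hy : y₁ = W.toAffine.negY x₂ y₂
    · rw [slope_of_Y_eq (by rw [hx]) (by rw [hy, scaleMap_negY hW]), slope_of_Y_eq hx hy,
        map_zero, zero_div]
    · rw [slope_of_Y_ne (by rw [hx]) (by rwa [scaleMap_negY hW, Ne, map_div_pow_inj]),
        slope_of_Y_ne hx hy, scaleMap_negY hW]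
      subst hW
      simp only [variableChange_a₁, variableChange_a₂, variableChange_a₄, map_a₁, map_a₂, map_a₄,
        Units.val_inv_eq_inv_val]
      field_simp
      simp only [map_sub, map_add, map_mul, map_div₀, map_ofNat]
      ring
  · rw [slope_of_X_ne (by rwa [Ne, map_div_pow_inj]), slope_of_X_ne hx, map_div₀]
    field_simp
    simp only [map_sub]

namespace Point

variable (σ u) in
noncomputable def scaleMap : W.toAffine.Point →+ W'.toAffine.Point where
  toFun
    | 0 => 0
    | some _ _ h => some _ _ ((scaleMap_nonsingular_iff hW).mpr h)
  map_zero' := rfl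
  map_add' := by
    rintro (_ | @⟨x₁, y₁, h₁⟩) (_ | @⟨x₂, y₂, h₂⟩)
    any_goals rfl
    by_cases hxy : x₁ = x₂ ∧ y₁ = W.toAffine.negY x₂ y₂
    · rw [add_of_Y_eq hxy.1 hxy.2, add_of_Y_eq (by rw [hxy.1]) (by rw [hxy.2, scaleMap_negY hW])]
    · rw [add_some hxy, add_some fun h => hxy ⟨map_div_pow_inj.mp h.1,
        map_div_pow_inj.mp (by rw [h.2, scaleMap_negY hW])⟩]
      simp only [scaleMap_slope hW, scaleMap_addX hW, scaleMap_addY hW]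

lemma scaleMap_some {x y : F} (h : W.toAffine.Nonsingular x y) :
    scaleMap σ u hW (some _ _ h) = some _ _ ((scaleMap_nonsingular_iff hW).mpr h) :=
  rfl

lemma scaleMap_injective : Function.Injective (scaleMap σ u hW) := by
  rintro (_ | _) (_ | _) h
  any_goals contradiction
  · rfl
  · simpa only [scaleMap_some, some.injEq, map_div_pow_inj] using h

end Point

end Affine

end WeierstrassCurve

namespace RatFunc

variable {K : Type*} [Field K]

noncomputable def expand (q : ℕ) (hq : q ≠ 0) : RatFunc K →+* RatFunc K :=
  mapRingHom (Polynomial.expand K q) <| nonZeroDivisors_le_comap_nonZeroDivisors_of_injective _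
    (Polynomial.expand_injective (Nat.pos_of_ne_zero hq))

lemma algebraMap_expand (q : ℕ) (p : Polynomial K) :
    algebraMap (Polynomial K) (RatFunc K) (Polynomial.expand K q p) =
      p.eval₂ (algebraMap K (RatFunc K)) (X ^ q) := by
  rw [Polynomial.coe_expand, Polynomial.hom_eval₂, map_pow, algebraMap_X]
  rfl

lemma expand_apply {q : ℕ} (hq : q ≠ 0) (f : RatFunc K) :
    expand q hq f = eval (algebraMap K (RatFunc K)) (X ^ q) f := by
  rw [expand, coe_mapRingHom_eq_coe_map, map_apply, eval, algebraMap_expand, algebraMap_expand]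

lemma expand_X {q : ℕ} (hq : q ≠ 0) : expand q hq (X : RatFunc K) = X ^ q := by
  rw [expand_apply, eval_X]

end RatFunc

open WeierstrassCurve.Affine

open Classical in
theorem base_change_injective_general (K : Type*) [Field K]
    (A B : ℚ) (k m : ℕ) (hdvd : m ∣ Nat.gcd 6 k) :
    ∃ φ : (⟨0, 0, 0, 0, RatFunc.X ^ k *
              ((A : RatFunc K) * RatFunc.X ^ m + (B : RatFunc K))⟩ :
            WeierstrassCurve (RatFunc K)).toAffine.Point →+
          (⟨0, 0, 0, 0, (A : RatFunc K) * RatFunc.X ^ 6 + (B : RatFunc K)⟩ :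
            WeierstrassCurve (RatFunc K)).toAffine.Point,
      Function.Injective φ ∧
      ∀ (f g : RatFunc K) (h : (⟨0, 0, 0, 0, RatFunc.X ^ k *
              ((A : RatFunc K) * RatFunc.X ^ m + (B : RatFunc K))⟩ :
            WeierstrassCurve (RatFunc K)).toAffine.Nonsingular f g),
        ∃ h' : (⟨0, 0, 0, 0, (A : RatFunc K) * RatFunc.X ^ 6 + (B : RatFunc K)⟩ :
            WeierstrassCurve (RatFunc K)).toAffine.Nonsingular
          (RatFunc.eval (algebraMap K (RatFunc K)) (RatFunc.X ^ (6 / m)) f /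
            RatFunc.X ^ (2 * (k / m)))
          (RatFunc.eval (algebraMap K (RatFunc K)) (RatFunc.X ^ (6 / m)) g /
            RatFunc.X ^ (3 * (k / m))),
        φ (.some _ _ h) = .some _ _ h' := by
  obtain ⟨hm6, hmk⟩ := Nat.dvd_gcd_iff.mp hdvd
  have hqm : 6 / m * m = 6 := Nat.div_mul_cancel hm6
  have hqk : 6 / m * k = k / m * 6 := by
    conv_lhs => rw [← Nat.div_mul_cancel hmk]
    conv_rhs => rw [← hqm]
    ring
  have hq : 6 / m ≠ 0 := fun h => by simp [h] at hqm
  let σ := RatFunc.expand (K := K) (6 / m) hq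
  let u := Units.mk0 (RatFunc.X ^ (k / m) : RatFunc K) (pow_ne_zero _ RatFunc.X_ne_zero)
  have hc : σ (RatFunc.X ^ k * ((A : RatFunc K) * RatFunc.X ^ m + (B : RatFunc K))) =
      (u : RatFunc K) ^ 6 * ((A : RatFunc K) * RatFunc.X ^ 6 + (B : RatFunc K)) := by
    rw [map_mul, map_add, map_mul, map_pow, map_pow, RatFunc.expand_X, map_ratCast, map_ratCast,
      Units.val_mk0, ← pow_mul, ← pow_mul, ← pow_mul, hqk, hqm]
  have hW := WeierstrassCurve.smul_map_mk_a₆ hc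
  have hcoord (n : ℕ) (f : RatFunc K) : σ f / (u : RatFunc K) ^ n =
      RatFunc.eval (algebraMap K (RatFunc K)) (RatFunc.X ^ (6 / m)) f /
        RatFunc.X ^ (n * (k / m)) := by
    rw [RatFunc.expand_apply, Units.val_mk0, ← pow_mul, mul_comm]
  refine ⟨Point.scaleMap σ u hW, Point.scaleMap_injective hW, fun f g h => ?_⟩
  rw [← hcoord 2 f, ← hcoord 3 g]
  exact ⟨_, Point.scaleMap_some hW h⟩

open Classical in
/-- For 0 ≤ k ≤ 5 and m a positive divisor of gcd(6,k), with q = 6/m and r = k/m,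
the map (f(s), g(s)) ↦ (f(t^q)/t^{2r}, g(t^q)/t^{3r}) defines an injective group
homomorphism from E_{A,B,k,m}(K(s)) to E_{A,B}(K(t)), where E_{A,B,k,m} is
y² = x³ + s^k(As^m + B) and E_{A,B} is y² = x³ + At⁶ + B. -/
theorem base_change_injective (K : Type*) [Field K] [CharZero K]
    (A B : ℚ) (hA : A ≠ 0) (hB : B ≠ 0) (k m : ℕ) (hk : k ≤ 5)
    (hm : 0 < m) (hdvd : m ∣ Nat.gcd 6 k) :
    ∃ φ : (⟨0, 0, 0, 0, RatFunc.X ^ k *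
              ((A : RatFunc K) * RatFunc.X ^ m + (B : RatFunc K))⟩ :
            WeierstrassCurve (RatFunc K)).toAffine.Point →+
          (⟨0, 0, 0, 0, (A : RatFunc K) * RatFunc.X ^ 6 + (B : RatFunc K)⟩ :
            WeierstrassCurve (RatFunc K)).toAffine.Point,
      Function.Injective φ ∧
      ∀ (f g : RatFunc K) (h : (⟨0, 0, 0, 0, RatFunc.X ^ k *
              ((A : RatFunc K) * RatFunc.X ^ m + (B : RatFunc K))⟩ :
            WeierstrassCurve (RatFunc K)).toAffine.Nonsingular f g),
        ∃ h' : (⟨0, 0, 0, 0, (A : RatFunc K) * RatFunc.X ^ 6 + (B : RatFunc K)⟩ :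
            WeierstrassCurve (RatFunc K)).toAffine.Nonsingular
          (RatFunc.eval (algebraMap K (RatFunc K)) (RatFunc.X ^ (6 / m)) f /
            RatFunc.X ^ (2 * (k / m)))
          (RatFunc.eval (algebraMap K (RatFunc K)) (RatFunc.X ^ (6 / m)) g /
            RatFunc.X ^ (3 * (k / m))),
        φ (.some _ _ h) = .some _ _ h' :=
  base_change_injective_general K A B k m hdvd
end

section
/- Let A, B ∈ ℚ* and define r₁, r₂, r₃, r₄ ∈ {0,1} as in the rank algorithm (rᵢ = 1 iff the corresponding cube and square conditions hold). Then r₁ + r₂ + r₃ + r₄ = 3 if and only if (the class of A in ℚ*/(ℚ*)⁶ lies in {1, (-3)³} and the class of B lies in {2⁴, (-3)³·2⁴}) or (the class of B lies in {1, (-3)³} and the class of A lies in {2⁴, (-3)³·2⁴}). -/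
/-!
A nonzero `x` is a cube with `x` or `-3x` a square iff its class modulo sixth powers is `1` or
`(-3)³`, and `4x` is a cube with `x` or `-3x` a square iff that class is `2⁴` or `(-3)³·2⁴`.
Since `r₃ = r₄ = 1` forces `r₁ = 1` and `r₁ = r₂ = 1` forces `r₄ = 1`, the sum can only be `3`
with `r₁ = r₄ = 1`. When `4AB` is a cube, `A` is a cube iff `4B` is; and `B`, `4B` are never both
cubes because `4` is not a rational cube (its `2`-adic valuation is `2`). So `r₂ = 1` excludes
`r₃ = 1` and conversely.
-/

section Field

variable {K : Type*} [Field K]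

theorem cube_mul_iff_of_cube {a b : K} (ha : a ≠ 0) (hcube : ∃ c, c ^ 3 = a) :
    (∃ c, c ^ 3 = a * b) ↔ ∃ c, c ^ 3 = b := by
  obtain ⟨c, rfl⟩ := hcube
  have hc : c ≠ 0 := by rintro rfl; simp at ha
  constructor
  · rintro ⟨d, hd⟩
    exact ⟨d / c, by rw [div_pow, hd]; field_simp⟩
  · rintro ⟨d, rfl⟩
    exact ⟨c * d, mul_pow c d 3⟩

variable [CharZero K]

theorem cube_and_square_iff {x : K} (hx : x ≠ 0) :
    (∃ c, c ^ 3 = x) ∧ ((∃ y, y ^ 2 = x) ∨ (∃ y, y ^ 2 = -3 * x)) ↔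
      ∃ c, x = c ^ 6 ∨ x = -27 * c ^ 6 := by
  constructor
  · rintro ⟨⟨d, hd⟩, ⟨y, hy⟩ | ⟨y, hy⟩⟩
    all_goals have hd0 : d ≠ 0 := by rintro rfl; simp [eq_comm, hx] at hd
    · refine ⟨y / d, Or.inl ?_⟩
      field_simp
      linear_combination x * (d ^ 3 + x) * hd - (y ^ 4 + y ^ 2 * x + x ^ 2) * hy
    · refine ⟨y / (3 * d), Or.inr ?_⟩
      field_simp
      linear_combination
        729 * x * (d ^ 3 + x) * hd + 27 * (y ^ 4 - 3 * y ^ 2 * x + 9 * x ^ 2) * hy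
  · rintro ⟨c, rfl | rfl⟩
    · exact ⟨⟨c ^ 2, by ring⟩, Or.inl ⟨c ^ 3, by ring⟩⟩
    · exact ⟨⟨-3 * c ^ 2, by ring⟩, Or.inr ⟨9 * c ^ 3, by ring⟩⟩

theorem cube_four_mul_and_square_iff {x : K} (hx : x ≠ 0) :
    (∃ c, c ^ 3 = 4 * x) ∧ ((∃ y, y ^ 2 = x) ∨ (∃ y, y ^ 2 = -3 * x)) ↔
      ∃ c, x = 16 * c ^ 6 ∨ x = -432 * c ^ 6 := by
  constructor
  · rintro ⟨⟨d, hd⟩, ⟨y, hy⟩ | ⟨y, hy⟩⟩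
    all_goals have hd0 : d ≠ 0 := by rintro rfl; simp [eq_comm, hx] at hd
    · refine ⟨y / d, Or.inl ?_⟩
      field_simp
      linear_combination x * (d ^ 3 + 4 * x) * hd - 16 * (y ^ 4 + y ^ 2 * x + x ^ 2) * hy
    · refine ⟨y / (3 * d), Or.inr ?_⟩
      field_simp
      linear_combination
        729 * x * (d ^ 3 + 4 * x) * hd + 432 * (y ^ 4 - 3 * y ^ 2 * x + 9 * x ^ 2) * hy
  · rintro ⟨c, rfl | rfl⟩
    · exact ⟨⟨4 * c ^ 2, by ring⟩, Or.inl ⟨4 * c ^ 3, by ring⟩⟩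
    · exact ⟨⟨-12 * c ^ 2, by ring⟩, Or.inr ⟨36 * c ^ 3, by ring⟩⟩

end Field

theorem Rat.not_cube_four : ¬ ∃ c : ℚ, c ^ 3 = 4 := by
  rintro ⟨c, hc⟩
  have hval := congrArg (padicValRat 2) hc
  rw [padicValRat.pow, show (4 : ℚ) = ((2 : ℕ) : ℚ) ^ 2 by norm_num, padicValRat.pow,
    padicValRat.self one_lt_two] at hval
  omega

theorem Rat.not_cube_of_cube_four_mul {x : ℚ} (hx : x ≠ 0) (h : ∃ c, c ^ 3 = 4 * x) :
    ¬ ∃ c, c ^ 3 = x := fun hcube =>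
  Rat.not_cube_four <| (cube_mul_iff_of_cube hx hcube).1 <| by rwa [mul_comm] at h

/-- With r₁,…,r₄ ∈ {0,1} defined by the cube/square conditions on nonzero
rationals A, B, we have r₁ + r₂ + r₃ + r₄ = 3 if and only if
(Ā ∈ {1, (-3)³} and B̄ ∈ {2⁴, (-3)³·2⁴}) or (B̄ ∈ {1, (-3)³} and
Ā ∈ {2⁴, (-3)³·2⁴}) in ℚ*/(ℚ*)⁶. -/
theorem rank_eq_three_iff (A B : ℚ) (hA : A ≠ 0) (hB : B ≠ 0)
    (r₁ r₂ r₃ r₄ : ℕ)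
    (h₁' : r₁ = 0 ∨ r₁ = 1) (h₂' : r₂ = 0 ∨ r₂ = 1)
    (h₃' : r₃ = 0 ∨ r₃ = 1) (h₄' : r₄ = 0 ∨ r₄ = 1)
    (h₁ : r₁ = 1 ↔ (∃ c : ℚ, c ^ 3 = 4 * A * B) ∧
      ((∃ x : ℚ, x ^ 2 = A) ∨ (∃ x : ℚ, x ^ 2 = -3 * A)))
    (h₂ : r₂ = 1 ↔ (∃ c : ℚ, c ^ 3 = A) ∧
      ((∃ x : ℚ, x ^ 2 = B) ∨ (∃ x : ℚ, x ^ 2 = -3 * B)))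
    (h₃ : r₃ = 1 ↔ (∃ c : ℚ, c ^ 3 = B) ∧
      ((∃ x : ℚ, x ^ 2 = A) ∨ (∃ x : ℚ, x ^ 2 = -3 * A)))
    (h₄ : r₄ = 1 ↔ (∃ c : ℚ, c ^ 3 = 4 * A * B) ∧
      ((∃ x : ℚ, x ^ 2 = B) ∨ (∃ x : ℚ, x ^ 2 = -3 * B))) :
    r₁ + r₂ + r₃ + r₄ = 3 ↔
      (((∃ c : ℚ, A = c ^ 6 ∨ A = -27 * c ^ 6) ∧
          (∃ c : ℚ, B = 16 * c ^ 6 ∨ B = -432 * c ^ 6)) ∨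
        ((∃ c : ℚ, B = c ^ 6 ∨ B = -27 * c ^ 6) ∧
          (∃ c : ℚ, A = 16 * c ^ 6 ∨ A = -432 * c ^ 6))) := by
  rw [← cube_and_square_iff hA, ← cube_and_square_iff hB,
    ← cube_four_mul_and_square_iff hA, ← cube_four_mul_and_square_iff hB]
  have cube_iff_of_cube_A (hcube : ∃ c, c ^ 3 = A) :
      (∃ c, c ^ 3 = 4 * A * B) ↔ ∃ c, c ^ 3 = 4 * B := by
    rw [show 4 * A * B = A * (4 * B) by ring, cube_mul_iff_of_cube hA hcube]
  have cube_iff_of_cube_B (hcube : ∃ c, c ^ 3 = B) :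
      (∃ c, c ^ 3 = 4 * A * B) ↔ ∃ c, c ^ 3 = 4 * A := by
    rw [show 4 * A * B = B * (4 * A) by ring, cube_mul_iff_of_cube hB hcube]
  have r₁_of (e₃ : r₃ = 1) (e₄ : r₄ = 1) : r₁ = 1 := h₁.2 ⟨(h₄.1 e₄).1, (h₃.1 e₃).2⟩
  have r₄_of (e₁ : r₁ = 1) (e₂ : r₂ = 1) : r₄ = 1 := h₄.2 ⟨(h₁.1 e₁).1, (h₂.1 e₂).2⟩
  constructor
  · intro hsum
    have e₁ : r₁ = 1 := h₁'.resolve_left fun e => by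
      have := r₁_of (by omega) (by omega); omega
    have e₄ : r₄ = 1 := h₄'.resolve_left fun e => by
      have := r₄_of e₁ (by omega); omega
    obtain ⟨hcube, hsqA⟩ := h₁.1 e₁
    rcases h₂' with e₂ | e₂
    · obtain ⟨hcubeB, -⟩ := h₃.1 (by omega)
      exact Or.inr ⟨⟨hcubeB, (h₄.1 e₄).2⟩, (cube_iff_of_cube_B hcubeB).1 hcube, hsqA⟩
    · obtain ⟨hcubeA, hsqB⟩ := h₂.1 e₂
      exact Or.inl ⟨⟨hcubeA, hsqA⟩, (cube_iff_of_cube_A hcubeA).1 hcube, hsqB⟩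
  · rintro (⟨⟨hcubeA, hsqA⟩, hcube4B, hsqB⟩ | ⟨⟨hcubeB, hsqB⟩, hcube4A, hsqA⟩)
    · have hcube := (cube_iff_of_cube_A hcubeA).2 hcube4B
      have hr₃ : r₃ ≠ 1 := fun e => Rat.not_cube_of_cube_four_mul hB hcube4B (h₃.1 e).1
      have e₁ := h₁.2 ⟨hcube, hsqA⟩
      have e₂ := h₂.2 ⟨hcubeA, hsqB⟩
      have e₄ := h₄.2 ⟨hcube, hsqB⟩
      omega
    · have hcube := (cube_iff_of_cube_B hcubeB).2 hcube4A
      have hr₂ : r₂ ≠ 1 := fun e => Rat.not_cube_of_cube_four_mul hA hcube4A (h₂.1 e).1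
      have e₁ := h₁.2 ⟨hcube, hsqA⟩
      have e₃ := h₃.2 ⟨hcubeB, hsqA⟩
      have e₄ := h₄.2 ⟨hcube, hsqB⟩
      omega
end
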